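/- Let x ∈ ℝ^{m-1} and y ∈ ℝ^n be generic increasing vectors (all sums x_k + y_ℓ - y_j for distinct index data are distinct) and let T be the (m-1)×n standard Young tableau given by the relative order of the outer sum x ∘ y. Then the number of distinct total orders on [m]×[n] arising as the relative order of x' ∘ y, where x' is x extended by one coordinate x_m > x_{m-1}, equals n²(m-1) + 1 - S, where S is the sum of the entries in the bottom (i.e., (m-1)-th) row of T. -/

import Mathlib

open scoped Classical

/-- The rank of the cell `p` among the entries of the outer sum of `x` and `y`:
the number of cells whose entry is at most the entry at `p`. -/
noncomputable def rankAt {m n : ℕ} (x : Fin m → ℝ) (y : Fin n → ℝ)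
    (p : Fin m × Fin n) : ℕ :=
  (Finset.univ.filter (fun q : Fin m × Fin n => x q.1 + y q.2 ≤ x p.1 + y p.2)).card

/-!
Extend `x` by `t > max x`. The new cell `(m, j)` lies above the old cell `(k, l)` exactly when
`t > x k + y l - y j`, and an admissible `t` avoids these crossing values, so the order of the
extended outer sum is determined by the set of crossing values below `t`. Those at most `max x`
lie below every admissible `t`; by genericity those above `max x` are pairwise distinct, and `N`
distinct values cut the half-line `t > max x` into `N + 1` classes. The rank of the bottom-row cell
`(m - 1, j)` counts the triples `(k, l, j)` whose crossing value is at most `max x`, so the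
bottom-row sum and the number of orders minus one partition the `m n²` triples.
-/

namespace Set

variable {α β γ : Type*} {f : α → β} {g : α → γ} {A : Set α}

theorem ncard_image_eq_ncard_image_pair (h : ∀ a ∈ A, ∀ a' ∈ A, f a = f a' → g a = g a') :
    (f '' A).ncard = ((fun a => (f a, g a)) '' A).ncard := by
  rw [← image_image Prod.fst (fun a => (f a, g a)), InjOn.ncard_image]
  rintro _ ⟨a, ha, rfl⟩ _ ⟨a', ha', rfl⟩ (hfa : f a = f a')
  exact Prod.ext hfa (h a ha a' ha' hfa)

theorem ncard_image_eq_ncard_image_of_eq_iff (h : ∀ a ∈ A, ∀ a' ∈ A, f a = f a' ↔ g a = g a') :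
    (f '' A).ncard = (g '' A).ncard := by
  rw [ncard_image_eq_ncard_image_pair fun a ha a' ha' => (h a ha a' ha').1,
    ncard_image_eq_ncard_image_pair (g := f) fun a ha a' ha' => (h a ha a' ha').2,
    ← ncard_image_of_injective _ Prod.swap_injective, image_image]
  rfl

end Set

namespace Finset

variable {α : Type*} [LinearOrder α] [DenselyOrdered α] [NoMaxOrder α]

theorem exists_gt_forall_le_or_gt (s : Finset α) (u : α) :
    ∃ t, u < t ∧ ∀ r ∈ s, r ≤ u ∨ t < r := by
  induction s using Finset.induction_on with
  | empty => simpa using exists_gt u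
  | insert a s _ ih =>
    obtain ⟨t, hut, ht⟩ := ih
    rcases le_or_gt a u with hau | hua
    · exact ⟨t, hut, by simpa [hau] using ht⟩
    · obtain ⟨t', hut', ht'⟩ := _root_.exists_between (lt_min hut hua)
      refine ⟨t', hut', ?_⟩
      simp only [mem_insert, forall_eq_or_imp]
      refine ⟨.inr (ht'.trans_le (min_le_right _ _)), fun r hr => ?_⟩
      exact (ht r hr).imp_right (ht'.trans_le (min_le_left _ _)).trans

theorem ncard_image_filter_lt (s : Finset α) (B : α) :
    ((fun t => s.filter (· < t)) '' {t | B < t ∧ t ∉ s}).ncard = (s.filter (B < ·)).card + 1 := by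
  set T := insert B (s.filter (B < ·))
  have hBT : ∀ u ∈ T, B ≤ u := by simp +contextual [T, le_of_lt]
  have hmono : StrictMonoOn (fun u => s.filter (· ≤ u)) T := by
    intro u hu u' hu' huu'
    have hu's : u' ∈ s := by
      rcases mem_insert.1 hu' with rfl | h
      · exact absurd huu' (hBT u hu).not_gt
      · exact (mem_filter.1 h).1
    refine (ssubset_iff_of_subset (monotone_filter_right s fun r _ hr => hr.trans huu'.le)).2 ?_
    exact ⟨u', by simp [hu's], by simp [huu']⟩
  have himage : (fun t => s.filter (· < t)) '' {t | B < t ∧ t ∉ s} =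
      ↑(T.image fun u => s.filter (· ≤ u)) := by
    ext C
    simp only [Set.mem_image, coe_image]
    constructor
    · rintro ⟨t, ⟨hBt, hts⟩, rfl⟩
      set L := insert B (s.filter (· < t))
      obtain ⟨u, huL, hmax⟩ : ∃ u ∈ L, ∀ r ∈ L, r ≤ u :=
        ⟨L.max' (insert_nonempty _ _), max'_mem _ _, fun r => le_max' L r⟩
      have hut : u < t := by
        rcases mem_insert.1 huL with h | h
        · exact h ▸ hBt
        · exact (mem_filter.1 h).2
      refine ⟨u, ?_, ?_⟩
      · rw [mem_coe]
        rcases (hmax B (mem_insert_self _ _)).lt_or_eq with hBu | hBu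
        · have hus : u ∈ s := (mem_filter.1 ((mem_insert.1 huL).resolve_left hBu.ne')).1
          exact mem_insert_of_mem (mem_filter.2 ⟨hus, hBu⟩)
        · exact hBu ▸ mem_insert_self _ _
      · ext r
        simp only [mem_filter, and_congr_right_iff]
        intro hr
        exact ⟨fun h => hut.trans_le' h, fun h => hmax r (by simp [L, hr, h])⟩
    · rintro ⟨u, hu, rfl⟩
      obtain ⟨t, hut, ht⟩ := exists_gt_forall_le_or_gt s u
      refine ⟨t, ⟨(hBT u hu).trans_lt hut, fun hts => ?_⟩, ?_⟩
      · rcases ht t hts with h | h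
        · exact h.not_gt hut
        · exact h.false
      · ext r
        simp only [mem_filter, and_congr_right_iff]
        intro hr
        rcases ht r hr with h | h
        · simp [h, h.trans_lt hut]
        · simp [h.not_gt, (hut.trans h).not_ge]
  rw [himage, Set.ncard_coe_finset, card_image_of_injOn hmono.injOn, card_insert_of_notMem (by simp)]

end Finset

open Function Finset

variable {m n : ℕ} (x : Fin m → ℝ) (y : Fin n → ℝ)

def outerSum (p : Fin m × Fin n) : ℝ := x p.1 + y p.2

def crossing (c : Fin m × Fin n × Fin n) : ℝ := x c.1 + y c.2.1 - y c.2.2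

noncomputable def crossings : Finset ℝ := univ.image (crossing x y)

def IsGeneric : Prop :=
  ∀ c c', crossing x y c = crossing x y c' →
    c = c' ∨ (c.1 = c'.1 ∧ c.2.1 = c.2.2 ∧ c'.2.1 = c'.2.2)

def snocOrder (t : ℝ) (p q : Fin (m + 1) × Fin n) : Prop :=
  outerSum (Fin.snoc x t : Fin (m + 1) → ℝ) y p < outerSum (Fin.snoc x t : Fin (m + 1) → ℝ) y q

variable {x y}

@[simp]
theorem outerSum_snoc_castSucc (t : ℝ) (k : Fin m) (l : Fin n) :
    outerSum (Fin.snoc x t : Fin (m + 1) → ℝ) y (k.castSucc, l) = outerSum x y (k, l) := by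
  simp [outerSum]

@[simp]
theorem outerSum_snoc_last (t : ℝ) (j : Fin n) :
    outerSum (Fin.snoc x t : Fin (m + 1) → ℝ) y (Fin.last m, j) = t + y j := by
  simp [outerSum]

theorem outerSum_lt_add_iff_crossing_lt (t : ℝ) (k : Fin m) (l j : Fin n) :
    outerSum x y (k, l) < t + y j ↔ crossing x y (k, l, j) < t := by
  simp only [outerSum, crossing, sub_lt_iff_lt_add]

theorem add_lt_outerSum_iff_lt_crossing (t : ℝ) (k : Fin m) (l j : Fin n) :
    t + y j < outerSum x y (k, l) ↔ t < crossing x y (k, l, j) := by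
  simp only [outerSum, crossing, lt_sub_iff_add_lt]

theorem crossing_mem_crossings (c : Fin m × Fin n × Fin n) : crossing x y c ∈ crossings x y :=
  mem_image_of_mem _ (mem_univ c)

theorem mem_crossings_iff_exists_outerSum_eq {t : ℝ} :
    t ∈ crossings x y ↔ ∃ k l j, outerSum x y (k, l) = t + y j := by
  simp [crossings, crossing, outerSum, sub_eq_iff_eq_add]

theorem injective_outerSum_snoc_iff (hxy : Injective (outerSum x y)) (hy : Injective y) (t : ℝ) :
    Injective (outerSum (Fin.snoc x t : Fin (m + 1) → ℝ) y) ↔ t ∉ crossings x y := by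
  rw [mem_crossings_iff_exists_outerSum_eq]
  constructor
  · rintro h ⟨k, l, j, hklj⟩
    have := h (a₁ := (k.castSucc, l)) (a₂ := (Fin.last m, j)) (by simpa using hklj)
    simp [Prod.ext_iff, Fin.castSucc_ne_last] at this
  · intro ht ⟨i, l⟩ ⟨i', l'⟩ h
    induction i using Fin.lastCases <;> induction i' using Fin.lastCases <;> simp at h
    · simpa using hy h
    · exact (ht ⟨_, _, _, h.symm⟩).elim
    · exact (ht ⟨_, _, _, h⟩).elim
    · simpa using hxy h

theorem filter_crossings_lt_eq_iff {t t' : ℝ} :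
    (crossings x y).filter (· < t) = (crossings x y).filter (· < t') ↔
      ∀ c, crossing x y c < t ↔ crossing x y c < t' := by
  constructor
  · intro h c
    simpa [crossing_mem_crossings] using congrArg (crossing x y c ∈ ·) h
  · intro h
    ext r
    simp only [crossings, mem_filter, mem_image, mem_univ, true_and]
    constructor <;> rintro ⟨⟨c, rfl⟩, hc⟩ <;> exact ⟨⟨c, rfl⟩, by simpa [h c] using hc⟩

theorem snocOrder_eq_iff {t t' : ℝ} (ht : t ∉ crossings x y) (ht' : t' ∉ crossings x y) :
    snocOrder x y t = snocOrder x y t' ↔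
      (crossings x y).filter (· < t) = (crossings x y).filter (· < t') := by
  rw [filter_crossings_lt_eq_iff]
  constructor
  · rintro h ⟨k, l, j⟩
    simpa [snocOrder, outerSum_lt_add_iff_crossing_lt] using
      congrFun (congrFun h (k.castSucc, l)) (Fin.last m, j)
  · intro h
    have hne : ∀ {s : ℝ} (c : Fin m × Fin n × Fin n), s ∉ crossings x y → crossing x y c ≠ s :=
      fun c hs hc => hs (hc ▸ crossing_mem_crossings c)
    ext ⟨i, l⟩ ⟨i', l'⟩
    induction i using Fin.lastCases <;> induction i' using Fin.lastCases <;>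
      simp only [snocOrder, outerSum_snoc_castSucc, outerSum_snoc_last, add_lt_add_iff_left,
        outerSum_lt_add_iff_crossing_lt, add_lt_outerSum_iff_lt_crossing]
    · rw [← not_le, ← not_le, (hne _ ht).le_iff_lt, (hne _ ht').le_iff_lt, h]
    · exact h _

theorem IsGeneric.injective_outerSum (h : IsGeneric x y) : Injective (outerSum x y) := by
  rintro ⟨k, l⟩ ⟨k', l'⟩ hkl
  have : crossing x y (k, l, l) = crossing x y (k', l', l) := by
    simp only [outerSum, crossing] at hkl ⊢
    linarith
  rcases h _ _ this with h | ⟨hk, -, hl⟩ <;> simp_all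

theorem IsGeneric.injOn_crossing (h : IsGeneric x y) {B : ℝ} (hB : ∀ k, x k ≤ B) :
    Set.InjOn (crossing x y) {c | B < crossing x y c} := by
  intro c hc c' _ hcc'
  refine (h c c' hcc').resolve_right fun ⟨_, hl, _⟩ => ?_
  have : crossing x y c = x c.1 := by simp [crossing, hl]
  exact (hB c.1).not_gt (this ▸ hc)

theorem IsGeneric.card_filter_crossings_gt (h : IsGeneric x y) {B : ℝ} (hB : ∀ k, x k ≤ B) :
    ((crossings x y).filter (B < ·)).card = (univ.filter fun c => B < crossing x y c).card := by
  rw [crossings, filter_image, card_image_of_injOn]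
  exact (h.injOn_crossing hB).mono fun c hc => (mem_filter.1 hc).2

theorem sum_rankAt_eq (i : Fin m) :
    ∑ j, rankAt x y (i, j) = (univ.filter fun c => crossing x y c ≤ x i).card := by
  simp only [rankAt, card_filter, Fintype.sum_prod_type]
  rw [sum_comm]
  refine sum_congr rfl fun k _ => ?_
  rw [sum_comm]
  refine sum_congr rfl fun l _ => sum_congr rfl fun j _ => ?_
  simp only [crossing, sub_le_iff_le_add]

theorem count_single_row_extensions (m n : ℕ) (hm : 1 ≤ m)
    (x : Fin m → ℝ) (y : Fin n → ℝ) (hx : StrictMono x) (hy : StrictMono y)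
    (hgen : ∀ k k' : Fin m, ∀ l l' j j' : Fin n,
      x k + y l - y j = x k' + y l' - y j' →
        (k = k' ∧ l = l' ∧ j = j') ∨ (k = k' ∧ l = j ∧ l' = j')) :
    {R : (Fin (m + 1) × Fin n) → (Fin (m + 1) × Fin n) → Prop |
        ∃ t : ℝ, x ⟨m - 1, by omega⟩ < t ∧
          Function.Injective (fun p : Fin (m + 1) × Fin n =>
            (Fin.snoc x t : Fin (m + 1) → ℝ) p.1 + y p.2) ∧
          R = fun p q : Fin (m + 1) × Fin n =>
            (Fin.snoc x t : Fin (m + 1) → ℝ) p.1 + y p.2 <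
              (Fin.snoc x t : Fin (m + 1) → ℝ) q.1 + y q.2}.ncard
      + ∑ j : Fin n, rankAt x y (⟨m - 1, by omega⟩, j) = n ^ 2 * m + 1 := by
  set M : Fin m := ⟨m - 1, by omega⟩
  have hxM : ∀ k, x k ≤ x M := fun k => hx.monotone (Fin.le_def.2 (by simp [M]; omega))
  have hgeneric : IsGeneric x y := fun c c' h =>
    (hgen _ _ _ _ _ _ h).imp_left fun ⟨hk, hl, hj⟩ => Prod.ext hk (Prod.ext hl hj)
  have hinj := injective_outerSum_snoc_iff hgeneric.injective_outerSum hy.injective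
  have hcount : (snocOrder x y '' {t | x M < t ∧ t ∉ crossings x y}).ncard
      + ∑ j, rankAt x y (M, j) = n ^ 2 * m + 1 := by
    rw [Set.ncard_image_eq_ncard_image_of_eq_iff (g := fun t => (crossings x y).filter (· < t))
        fun t ht t' ht' => snocOrder_eq_iff ht.2 ht'.2,
      Finset.ncard_image_filter_lt, hgeneric.card_filter_crossings_gt hxM, sum_rankAt_eq]
    simp_rw [← not_lt]
    rw [add_right_comm, card_filter_add_card_filter_not]
    simp only [card_univ, Fintype.card_prod, Fintype.card_fin]
    ring
  convert hcount using 3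
  ext R
  exact exists_congr fun t => ⟨fun ⟨hMt, ht, hR⟩ => ⟨⟨hMt, (hinj t).1 ht⟩, hR.symm⟩,
    fun ⟨⟨hMt, ht⟩, hR⟩ => ⟨hMt, (hinj t).2 ht, hR.symm⟩⟩
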